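/- Let f : K → ℝ be centered, ⟨f⟩^s = 0, and let V be any solution of LV + f = 0 on K. Then for all x, y ∈ K, V(x) − V(y) = ∑_z ρ^s(z) f(z) (τ(y,z) − τ(x,z)). -/

import Mathlib

/-!
Write `τ_z = τ(·, z)`. Pairing `Lτ_z` with `ρˢ` and using `ρˢ L = 0` gives
`ρˢ(z) · Lτ_z = 𝟙_z - ρˢ(z)`. Hence `U := -∑_z ρˢ(z) f(z) τ_z` satisfies `LU = -f` exactly
because `⟨f⟩ˢ = 0`, so `V - U` is `L`-harmonic, and by the maximum principle on the strongly
connected graph it is constant.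
-/

open scoped Classical

/-- The backward generator `L` of the Markov jump process with rates `k`:
`L x y = k x y` for `x ≠ y` and `L x x = -∑_{z ≠ x} k x z`. -/
noncomputable def gen {K : Type*} [Fintype K] [DecidableEq K] (k : K → K → ℝ) :
    Matrix K K ℝ :=
  Matrix.of fun x y => if x = y then -∑ z ∈ Finset.univ.erase x, k x z else k x y

/-- Strong connectivity (irreducibility) of the digraph with an arc `(x,y)` whenever
`k x y > 0`. -/
def StronglyConnected {K : Type*} (k : K → K → ℝ) : Prop :=
  ∀ x y : K, Relation.ReflTransGen (fun a b => 0 < k a b) x y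

section

open Matrix

variable {K : Type*} [Fintype K] [DecidableEq K]

lemma gen_mulVec_apply (k : K → K → ℝ) (g : K → ℝ) (x : K) :
    (gen k *ᵥ g) x = ∑ y, k x y * (g y - g x) := by
  have entry : ∀ y, gen k x y = k x y - if x = y then ∑ z, k x z else 0 := by
    intro y
    simp only [gen, of_apply]
    split_ifs with hxy
    · rw [hxy, ← Finset.add_sum_erase _ _ (Finset.mem_univ y)]
      ring
    · ring
  simp only [mulVec, dotProduct, entry, sub_mul, ite_mul, zero_mul, Finset.sum_sub_distrib,
    Finset.sum_ite_eq, Finset.mem_univ, if_true, mul_sub, Finset.sum_mul]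

/-- Maximum principle: `h` is constant along every arc leaving a point where it is maximal. -/
lemma StronglyConnected.eq_of_gen_mulVec_eq_zero {k : K → K → ℝ}
    (hk : ∀ x y : K, x ≠ y → 0 ≤ k x y) (hirr : StronglyConnected k) {h : K → ℝ}
    (hh : gen k *ᵥ h = 0) (x y : K) : h x = h y := by
  obtain ⟨x₀, -, hmax⟩ := Finset.exists_max_image Finset.univ h ⟨x, Finset.mem_univ x⟩
  have arc : ∀ a b, h a = h x₀ → 0 < k a b → h b = h x₀ := by
    intro a b ha hab
    have terms_nonpos : ∀ y ∈ Finset.univ, k a y * (h y - h a) ≤ 0 := by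
      intro y _
      rcases eq_or_ne y a with rfl | hya
      · simp
      · exact mul_nonpos_of_nonneg_of_nonpos (hk a y hya.symm)
          (by linarith [hmax y (Finset.mem_univ y)])
    have sum_zero : ∑ y, k a y * (h y - h a) = 0 := by
      rw [← gen_mulVec_apply, hh, Pi.zero_apply]
    have := (Finset.sum_eq_zero_iff_of_nonpos terms_nonpos).mp sum_zero b (Finset.mem_univ b)
    rcases mul_eq_zero.mp this with hk0 | hb
    · exact absurd hk0 hab.ne'
    · linarith
  have eq_max : ∀ w, h w = h x₀ := fun w => by
    induction hirr x₀ w with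
    | refl => rfl
    | tail _ hbc ih => exact arc _ _ ih hbc
  rw [eq_max x, eq_max y]

lemma mul_gen_mulVec_of_eq_neg_one_off {k : K → K → ℝ} {ρ : K → ℝ}
    (hρsum : ∑ x, ρ x = 1) (hρstat : vecMul ρ (gen k) = 0) {z : K} {t : K → ℝ}
    (ht : ∀ x, x ≠ z → (gen k *ᵥ t) x = -1) (x : K) :
    ρ z * (gen k *ᵥ t) x = (if x = z then 1 else 0) - ρ z := by
  rcases eq_or_ne x z with rfl | hxz
  · have pairing : ρ ⬝ᵥ (gen k *ᵥ t) = 0 := by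
      rw [dotProduct_mulVec, hρstat, zero_dotProduct]
    rw [dotProduct, ← Finset.add_sum_erase _ _ (Finset.mem_univ x),
      Finset.sum_congr rfl fun y hy => by rw [ht y (Finset.ne_of_mem_erase hy)]] at pairing
    have hρsplit := Finset.add_sum_erase _ ρ (Finset.mem_univ x)
    simp only [mul_neg_one, Finset.sum_neg_distrib] at pairing
    rw [if_pos rfl]
    linarith
  · rw [ht x hxz, if_neg hxz]
    ring

lemma gen_mulVec_neg_sum_mul_mfpt {k : K → K → ℝ} {ρ : K → ℝ}
    (hρsum : ∑ x, ρ x = 1) (hρstat : vecMul ρ (gen k) = 0) {τ : K → K → ℝ}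
    (hτ : ∀ z x, x ≠ z → (gen k *ᵥ (τ · z)) x = -1) {f : K → ℝ} (hf : ∑ x, f x * ρ x = 0) :
    gen k *ᵥ (fun x => -∑ z, ρ z * f z * τ x z) = -f := by
  have hU : (fun x => -∑ z, ρ z * f z * τ x z) = -∑ z, (ρ z * f z) • (τ · z) := by
    ext x
    simp [Finset.sum_apply]
  ext x
  rw [hU, mulVec_neg, mulVec_sum]
  simp only [mulVec_smul, Pi.neg_apply, Finset.sum_apply, Pi.smul_apply, smul_eq_mul]
  calc -∑ z, ρ z * f z * (gen k *ᵥ (τ · z)) x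
      = -∑ z, f z * ((if x = z then 1 else 0) - ρ z) := by
        congr 1
        refine Finset.sum_congr rfl fun z _ => ?_
        rw [← mul_gen_mulVec_of_eq_neg_one_off hρsum hρstat (hτ z)]
        ring
    _ = -f x := by
        simp only [mul_sub, mul_ite, mul_one, mul_zero, Finset.sum_sub_distrib,
          Finset.sum_ite_eq, Finset.mem_univ, if_true, hf, sub_zero]

end

theorem quasipotential_difference_mfpt_general
    {K : Type*} [Fintype K] [DecidableEq K]
    (k : K → K → ℝ) (hk : ∀ x y : K, x ≠ y → 0 ≤ k x y)
    (hirr : StronglyConnected k)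
    (ρ : K → ℝ) (hρsum : ∑ x, ρ x = 1)
    (hρstat : Matrix.vecMul ρ (gen k) = 0)
    (τ : K → K → ℝ)
    (hτ : ∀ z x, x ≠ z → (∑ y, k x y * (τ y z - τ x z)) + 1 = 0)
    (f : K → ℝ) (hf : ∑ x, f x * ρ x = 0)
    (V : K → ℝ) (hV : ∀ x, (∑ y, k x y * (V y - V x)) + f x = 0) :
    ∀ x y, V x - V y = ∑ z, ρ z * f z * (τ y z - τ x z) := by
  set U : K → ℝ := fun x => -∑ z, ρ z * f z * τ x z
  have hU : (gen k).mulVec U = -f := gen_mulVec_neg_sum_mul_mfpt hρsum hρstat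
    (fun z x hxz => by rw [gen_mulVec_apply]; linarith [hτ z x hxz]) hf
  have hVU : (gen k).mulVec (V - U) = 0 := by
    ext x
    rw [Matrix.mulVec_sub, hU, Pi.sub_apply, gen_mulVec_apply, Pi.neg_apply, Pi.zero_apply]
    linarith [hV x]
  intro x y
  have hconst : V x - U x = V y - U y := hirr.eq_of_gen_mulVec_eq_zero hk hVU x y
  simp only [U, sub_neg_eq_add] at hconst
  simp only [mul_sub, Finset.sum_sub_distrib]
  linarith

/-- For centered `f` and any solution `V` of `LV + f = 0`,
`V(x) - V(y) = ∑_z ρˢ(z) f(z) (τ(y,z) - τ(x,z))`. -/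
theorem quasipotential_difference_mfpt
    {K : Type*} [Fintype K] [DecidableEq K]
    (k : K → K → ℝ) (hk : ∀ x y : K, x ≠ y → 0 ≤ k x y)
    (hirr : StronglyConnected k)
    (ρ : K → ℝ) (hρpos : ∀ x, 0 < ρ x) (hρsum : ∑ x, ρ x = 1)
    (hρstat : Matrix.vecMul ρ (gen k) = 0)
    (τ : K → K → ℝ) (hτ0 : ∀ z, τ z z = 0)
    (hτ : ∀ z x, x ≠ z → (∑ y, k x y * (τ y z - τ x z)) + 1 = 0)
    (f : K → ℝ) (hf : ∑ x, f x * ρ x = 0)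
    (V : K → ℝ) (hV : ∀ x, (∑ y, k x y * (V y - V x)) + f x = 0) :
    ∀ x y, V x - V y = ∑ z, ρ z * f z * (τ y z - τ x z) :=
  quasipotential_difference_mfpt_general k hk hirr ρ hρsum hρstat τ hτ f hf V hV
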